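/- arXiv:math/0606168 — 2 statements merged into one kernel-verified Lean document; each statement's English description precedes it below -/
import Mathlib

section
/- Let A be a unital C*-algebra and let (A_β)_{β<α} be a chain of C*-subalgebras indexed by a limit ordinal α, with A_β ⊆ A_γ for β ≤ γ. Let A_α be the closure of the union ⋃_{β<α} A_β, and suppose f is a state on A_α whose restriction to each A_β is a pure state. Then f is a pure state on A_α. -/
/-!
If `f = (g₁ + g₂) / 2` on `A_α`, purity of `f` on each `A_β` forces `g₁ = g₂` on the union of
the `A_β`. Positive functionals on a C⋆-algebra are continuous, so `g₁` and `g₂`, agreeing on a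
dense subset of `A_α`, agree on all of `A_α`.
-/

open scoped ComplexOrder InnerProductSpace

variable {A : Type*} [NormedRing A] [StarRing A] [CStarRing A] [NormedAlgebra ℂ A]
  [StarModule ℂ A] [CompleteSpace A]

/-- A state on a unital C*-algebra, viewed through a (unital) star subalgebra `S`:
a linear functional on `S`, positive on `S`, sending `1` to `1` (equivalently, of norm 1).
We represent it as an ambient function `A → ℂ`, constrained only on `S`. -/
def IsStateOn (S : StarSubalgebra ℂ A) (f : A → ℂ) : Prop :=
  (∀ x ∈ S, ∀ y ∈ S, f (x + y) = f x + f y) ∧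
  (∀ (c : ℂ), ∀ x ∈ S, f (c • x) = c * f x) ∧
  (∀ x ∈ S, 0 ≤ f (star x * x)) ∧
  f 1 = 1

/-- A state is pure if it is an extreme point of the state space. -/
def IsPureStateOn (S : StarSubalgebra ℂ A) (f : A → ℂ) : Prop :=
  IsStateOn S f ∧ ∀ g₁ g₂ : A → ℂ, IsStateOn S g₁ → IsStateOn S g₂ →
    (∀ x ∈ S, f x = (g₁ x + g₂ x) / 2) → ∀ x ∈ S, g₁ x = g₂ x

/-- A maximal abelian self-adjoint subalgebra. -/
def IsMasa (M : StarSubalgebra ℂ A) : Prop :=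
  (∀ x ∈ M, ∀ y ∈ M, x * y = y * x) ∧
  ∀ N : StarSubalgebra ℂ A, (∀ x ∈ N, ∀ y ∈ N, x * y = y * x) → M ≤ N → N = M

/-- A projection: a self-adjoint idempotent. -/
def IsProjection (p : A) : Prop := star p = p ∧ p * p = p

theorem IsStateOn.mono {B : Type*} [NormedRing B] [StarRing B] [NormedAlgebra ℂ B]
    [StarModule ℂ B] {S T : StarSubalgebra ℂ B} {g : B → ℂ} (hST : S ≤ T)
    (hg : IsStateOn T g) : IsStateOn S g :=
  ⟨fun x hx y hy => hg.1 x (hST hx) y (hST hy), fun c x hx => hg.2.1 c x (hST hx),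
    fun x hx => hg.2.2.1 x (hST hx), hg.2.2.2⟩

theorem IsStateOn.continuousOn {S : StarSubalgebra ℂ A} {g : A → ℂ} (hS : IsClosed (S : Set A))
    (hg : IsStateOn S g) : ContinuousOn g S := by
  let _ : CStarAlgebra A := {}
  let _ := CStarAlgebra.spectralOrder S
  let _ := CStarAlgebra.spectralOrderedRing S
  obtain ⟨hadd, hsmul, hpos, -⟩ := hg
  let φ : S →ₗ[ℂ] ℂ :=
    { toFun := fun x => g x
      map_add' := fun x y => hadd x x.2 y y.2
      map_smul' := fun c x => hsmul c x x.2 }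
  have hφ : ∀ x, 0 ≤ x → 0 ≤ φ x := by
    intro x hx
    obtain ⟨b, rfl⟩ := CStarAlgebra.nonneg_iff_eq_star_mul_self.mp hx
    exact hpos b b.2
  rw [continuousOn_iff_continuous_domRestrict]
  -- continuity comes from `PositiveLinearMap.exists_norm_apply_le`
  exact map_continuous (PositiveLinearMap.mk₀ φ hφ)

theorem IsPureStateOn.of_eq_closure_biUnion {ι : Type*} {s : Set ι}
    (T : ι → StarSubalgebra ℂ A) {S : StarSubalgebra ℂ A}
    (hS : (S : Set A) = closure (⋃ i ∈ s, (T i : Set A))) {f : A → ℂ} (hf : IsStateOn S f)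
    (hpure : ∀ i ∈ s, IsPureStateOn (T i) f) : IsPureStateOn S f := by
  have hUS : (⋃ i ∈ s, (T i : Set A)) ⊆ S := hS ▸ subset_closure
  have hTS : ∀ i ∈ s, T i ≤ S := fun i hi x hx => hUS (Set.mem_biUnion hi hx)
  have hSclosed : IsClosed (S : Set A) := hS ▸ isClosed_closure
  refine ⟨hf, fun g₁ g₂ hg₁ hg₂ havg => ?_⟩
  have hunion : Set.EqOn g₁ g₂ (⋃ i ∈ s, (T i : Set A)) := by
    simp only [Set.EqOn, Set.mem_iUnion₂]
    rintro x ⟨i, hi, hx⟩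
    exact (hpure i hi).2 g₁ g₂ (hg₁.mono (hTS i hi)) (hg₂.mono (hTS i hi))
      (fun y hy => havg y (hTS i hi hy)) x hx
  exact hunion.of_subset_closure (hg₁.continuousOn hSclosed) (hg₂.continuousOn hSclosed)
    hUS hS.le

theorem pure_of_pure_on_chain_general {A : Type*} [NormedRing A] [StarRing A] [CStarRing A]
    [NormedAlgebra ℂ A] [StarModule ℂ A] [CompleteSpace A]
    (α : Ordinal) (Achain : Ordinal → StarSubalgebra ℂ A)
    (Aα : StarSubalgebra ℂ A)
    (hAα : (Aα : Set A) = closure (⋃ β < α, (Achain β : Set A)))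
    (f : A → ℂ) (hf : IsStateOn Aα f)
    (hpure : ∀ β < α, IsPureStateOn (Achain β) f) :
    IsPureStateOn Aα f :=
  IsPureStateOn.of_eq_closure_biUnion Achain hAα hf hpure

/-- A state on the closure of the union of a chain of C*-subalgebras indexed by a
limit ordinal, whose restriction to each member of the chain is pure, is itself pure. -/
theorem pure_of_pure_on_chain {A : Type*} [NormedRing A] [StarRing A] [CStarRing A]
    [NormedAlgebra ℂ A] [StarModule ℂ A] [CompleteSpace A]
    (α : Ordinal) (hα : Order.IsSuccLimit α) (Achain : Ordinal → StarSubalgebra ℂ A)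
    (hclosed : ∀ β < α, IsClosed ((Achain β : Set A)))
    (hmono : ∀ β γ : Ordinal, β ≤ γ → γ < α → Achain β ≤ Achain γ)
    (Aα : StarSubalgebra ℂ A)
    (hAα : (Aα : Set A) = closure (⋃ β < α, (Achain β : Set A)))
    (f : A → ℂ) (hf : IsStateOn Aα f)
    (hpure : ∀ β < α, IsPureStateOn (Achain β) f) :
    IsPureStateOn Aα f :=
  pure_of_pure_on_chain_general α Achain Aα hAα f hf hpure
end

section
/- Let C be a C*-algebra containing a family of 2^ℵ₀ mutually orthogonal nonzero projections (p_α), and suppose for each α there exist projections q¹_α, q²_α ≤ p_α with q¹_α q²_α ≠ q²_α q¹_α. Then C has at least 2^(2^ℵ₀) distinct maximal abelian self-adjoint subalgebras: for each subset S of the index set, any masa containing {q¹_α : α ∈ S} ∪ {q²_α : α ∉ S} is distinct from any masa arising from a different subset S'. -/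
open scoped ComplexOrder InnerProductSpace

variable {A : Type*} [NormedRing A] [StarRing A] [CStarRing A] [NormedAlgebra ℂ A]
  [StarModule ℂ A] [CompleteSpace A]

/-- Every commutative star subalgebra is contained in a maximal one (Zorn). -/
lemma exists_masa_ge' {C : Type} [Ring C] [StarRing C] [Algebra ℂ C] [StarModule ℂ C]
    (B : StarSubalgebra ℂ C) (hB : ∀ x ∈ B, ∀ y ∈ B, x * y = y * x) :
    ∃ M : StarSubalgebra ℂ C, B ≤ M ∧ (∀ x ∈ M, ∀ y ∈ M, x * y = y * x) ∧
      ∀ N : StarSubalgebra ℂ C, (∀ x ∈ N, ∀ y ∈ N, x * y = y * x) → M ≤ N → N = M := by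
  have hzorn : ∀ c ⊆ {N : StarSubalgebra ℂ C | ∀ x ∈ N, ∀ y ∈ N, x * y = y * x},
      IsChain (· ≤ ·) c → ∀ y ∈ c,
      ∃ ub ∈ {N : StarSubalgebra ℂ C | ∀ x ∈ N, ∀ y ∈ N, x * y = y * x},
        ∀ z ∈ c, z ≤ ub := by
    intro c hcs hchain y hy
    have key : ∀ x ∈ ⋃ N ∈ c, (N : Set C), ∀ z ∈ ⋃ N ∈ c, (N : Set C),
        ∃ N ∈ c, x ∈ N ∧ z ∈ N := by
      intro x hx z hz
      simp only [Set.mem_iUnion, SetLike.mem_coe, exists_prop] at hx hz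
      obtain ⟨N₁, hN₁, hxN⟩ := hx
      obtain ⟨N₂, hN₂, hzN⟩ := hz
      rcases hchain.total hN₁ hN₂ with h | h
      · exact ⟨N₂, hN₂, h hxN, hzN⟩
      · exact ⟨N₁, hN₁, hxN, h hzN⟩
    have memU : ∀ (N : StarSubalgebra ℂ C), N ∈ c → ∀ x ∈ N, x ∈ ⋃ N ∈ c, (N : Set C) := by
      intro N hN x hx
      simp only [Set.mem_iUnion, SetLike.mem_coe, exists_prop]
      exact ⟨N, hN, hx⟩
    refine ⟨{ carrier := ⋃ N ∈ c, (N : Set C)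
              mul_mem' := ?_
              one_mem' := memU y hy 1 (one_mem y)
              add_mem' := ?_
              zero_mem' := memU y hy 0 (zero_mem y)
              algebraMap_mem' := fun r => memU y hy _ (algebraMap_mem y r)
              star_mem' := ?_ }, ?_, ?_⟩
    · intro a b ha hb
      obtain ⟨N, hN, haN, hbN⟩ := key a ha b hb
      exact memU N hN _ (mul_mem haN hbN)
    · intro a b ha hb
      obtain ⟨N, hN, haN, hbN⟩ := key a ha b hb
      exact memU N hN _ (add_mem haN hbN)
    · intro a ha
      simp only [Set.mem_iUnion, SetLike.mem_coe, exists_prop] at ha ⊢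
      obtain ⟨N, hN, haN⟩ := ha
      exact ⟨N, hN, star_mem haN⟩
    · intro a ha b hb
      obtain ⟨N, hN, haN, hbN⟩ := key a ha b hb
      exact hcs hN a haN b hbN
    · intro N hN x hx
      exact memU N hN x hx
  obtain ⟨m, hBm, hm⟩ := zorn_le_nonempty₀
    {N : StarSubalgebra ℂ C | ∀ x ∈ N, ∀ y ∈ N, x * y = y * x} hzorn B hB
  exact ⟨m, hBm, hm.1, fun N hN hmN => le_antisymm (hm.2 hN hmN) hmN⟩

/-- Given continuum many mutually orthogonal nonzero projections, each dominating a pair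
of non-commuting projections, masas chosen to contain `{q¹_α : α ∈ S} ∪ {q²_α : α ∉ S}`
are distinct for distinct `S`, so there are at least `2 ^ (2 ^ ℵ₀)` masas. -/
theorem many_masas {C : Type} [NormedRing C] [StarRing C] [CStarRing C]
    [NormedAlgebra ℂ C] [StarModule ℂ C] [CompleteSpace C]
    (I : Type) (hI : Cardinal.mk I = Cardinal.continuum)
    (p q₁ q₂ : I → C)
    (hproj : ∀ α, IsProjection (p α) ∧ IsProjection (q₁ α) ∧ IsProjection (q₂ α))
    (hpne : ∀ α, p α ≠ 0)
    (horth : ∀ α β, α ≠ β → p α * p β = 0)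
    (hle₁ : ∀ α, p α * q₁ α = q₁ α ∧ q₁ α * p α = q₁ α)
    (hle₂ : ∀ α, p α * q₂ α = q₂ α ∧ q₂ α * p α = q₂ α)
    (hnc : ∀ α, q₁ α * q₂ α ≠ q₂ α * q₁ α) :
    (∀ S S' : Set I, S ≠ S' →
      ∀ M M' : StarSubalgebra ℂ C, IsMasa M → IsMasa M' →
        (∀ α ∈ S, q₁ α ∈ M) → (∀ α ∉ S, q₂ α ∈ M) →
        (∀ α ∈ S', q₁ α ∈ M') → (∀ α ∉ S', q₂ α ∈ M') → M ≠ M') ∧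
    (2 : Cardinal) ^ ((2 : Cardinal) ^ Cardinal.aleph0) ≤ Cardinal.mk {M : StarSubalgebra ℂ C // IsMasa M} := by

  constructor
  · intro S S' hne M M' hM hM' h1 h2 h1' h2' heq
    subst heq
    obtain ⟨α, hα⟩ : ∃ α, ¬(α ∈ S ↔ α ∈ S') := by
      by_contra h; push_neg at h; exact hne (Set.ext h)
    by_cases hαS : α ∈ S
    · have hαS' : α ∉ S' := fun h => hα ⟨fun _ => h, fun _ => hαS⟩
      exact hnc α (hM.1 _ (h1 α hαS) _ (h2' α hαS'))
    · have hαS' : α ∈ S' := by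
        by_contra h; exact hα ⟨fun hs => absurd hs hαS, fun hs => absurd hs h⟩
      exact hnc α (hM.1 _ (h1' α hαS') _ (h2 α hαS))
  · have horthq : ∀ (r s : I → C), (∀ α, p α * r α = r α ∧ r α * p α = r α) →
        (∀ α, p α * s α = s α ∧ s α * p α = s α) → ∀ α β, α ≠ β → r α * s β = 0 := by
      intro r s hr hs α β hab
      calc r α * s β = (r α * p α) * (p β * s β) := by rw [(hr α).2, (hs β).1]
      _ = r α * ((p α * p β) * s β) := by simp only [mul_assoc]
      _ = 0 := by rw [horth α β hab, zero_mul, mul_zero]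
    have hz : ∀ (r s : I → C), (∀ α, p α * r α = r α ∧ r α * p α = r α) →
        (∀ α, p α * s α = s α ∧ s α * p α = s α) → ∀ α β, α ≠ β → r α * s β = s β * r α := by
      intro r s hr hs α β hab
      rw [horthq r s hr hs α β hab, horthq s r hs hr β α (Ne.symm hab)]
    have hmasa : ∀ S : Set I, ∃ M : StarSubalgebra ℂ C,
        (∀ α ∈ S, q₁ α ∈ M) ∧ (∀ α ∉ S, q₂ α ∈ M) ∧ IsMasa M := by
      intro S
      have hcomm : ∀ a ∈ q₁ '' S ∪ q₂ '' Sᶜ, ∀ b ∈ q₁ '' S ∪ q₂ '' Sᶜ, a * b = b * a := by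
        intro a ha b hb
        simp only [Set.mem_union, Set.mem_image, Set.mem_compl_iff] at ha hb
        rcases ha with ⟨α, hα, rfl⟩ | ⟨α, hα, rfl⟩ <;>
          rcases hb with ⟨β, hβ, rfl⟩ | ⟨β, hβ, rfl⟩
        · by_cases h : α = β
          · rw [h]
          · exact hz q₁ q₁ hle₁ hle₁ α β h
        · exact hz q₁ q₂ hle₁ hle₂ α β (fun h => hβ (h ▸ hα))
        · exact hz q₂ q₁ hle₂ hle₁ α β (fun h => hα (h.symm ▸ hβ))
        · by_cases h : α = β
          · rw [h]
          · exact hz q₂ q₂ hle₂ hle₂ α β h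
      have hstar : ∀ b ∈ q₁ '' S ∪ q₂ '' Sᶜ, star b = b := by
        intro b hb
        simp only [Set.mem_union, Set.mem_image, Set.mem_compl_iff] at hb
        rcases hb with ⟨β, hβ, rfl⟩ | ⟨β, hβ, rfl⟩
        · exact (hproj β).2.1.1
        · exact (hproj β).2.2.1
      have habelian : ∀ x ∈ StarAlgebra.adjoin ℂ (q₁ '' S ∪ q₂ '' Sᶜ),
          ∀ y ∈ StarAlgebra.adjoin ℂ (q₁ '' S ∪ q₂ '' Sᶜ), x * y = y * x := by
        intro x hx y hy
        letI := StarAlgebra.adjoinCommSemiringOfComm ℂ hcomm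
          (fun a ha b hb => by rw [hstar b hb]; exact hcomm a ha b hb)
        exact congrArg Subtype.val
          (mul_comm (⟨x, hx⟩ : StarAlgebra.adjoin ℂ (q₁ '' S ∪ q₂ '' Sᶜ)) ⟨y, hy⟩)
      obtain ⟨M, hle, hab, hmax⟩ :=
        exists_masa_ge' (StarAlgebra.adjoin ℂ (q₁ '' S ∪ q₂ '' Sᶜ)) habelian
      exact ⟨M, fun α hα => hle (StarAlgebra.subset_adjoin ℂ _ (Or.inl ⟨α, hα, rfl⟩)),
        fun α hα => hle (StarAlgebra.subset_adjoin ℂ _ (Or.inr ⟨α, hα, rfl⟩)), hab, hmax⟩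
    choose M hM1 hM2 hM3 using hmasa
    have hinj : Function.Injective
        (fun S => (⟨M S, hM3 S⟩ : {M : StarSubalgebra ℂ C // IsMasa M})) := by
      intro S S' h
      by_contra hne
      have hd : ∀ S S' : Set I, S ≠ S' →
          ∀ M M' : StarSubalgebra ℂ C, IsMasa M → IsMasa M' →
          (∀ α ∈ S, q₁ α ∈ M) → (∀ α ∉ S, q₂ α ∈ M) →
          (∀ α ∈ S', q₁ α ∈ M') → (∀ α ∉ S', q₂ α ∈ M') → M ≠ M' := by
        intro S S' hne M M' hM hM' h1 h2 h1' h2' heq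
        subst heq
        obtain ⟨α, hα⟩ : ∃ α, ¬(α ∈ S ↔ α ∈ S') := by
          by_contra h; push_neg at h; exact hne (Set.ext h)
        by_cases hαS : α ∈ S
        · have hαS' : α ∉ S' := fun h => hα ⟨fun _ => h, fun _ => hαS⟩
          exact hnc α (hM.1 _ (h1 α hαS) _ (h2' α hαS'))
        · have hαS' : α ∈ S' := by
            by_contra h; exact hα ⟨fun hs => absurd hs hαS, fun hs => absurd hs h⟩
          exact hnc α (hM.1 _ (h1' α hαS') _ (h2 α hαS))
      exact hd S S' hne (M S) (M S') (hM3 S) (hM3 S') (hM1 S) (hM2 S) (hM1 S') (hM2 S')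
        (congrArg Subtype.val h)
    rw [Cardinal.two_power_aleph0, ← hI, ← Cardinal.mk_set]
    exact Cardinal.mk_le_of_injective hinj
end
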